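/- The uncertainty coefficient is strictly positive: there exists ε > 0 such that every density matrix ρ satisfies G_XP(ρ) ≤ 2(d − 1)/(d + 1) − ε; equivalently, the supremum of G_XP over all density matrices is strictly less than 2(d − 1)/(d + 1). -/

import Mathlib

/-!
The Gini index of a probability vector `p` on `d ≥ 2` points is at most
`(d - 1)/(d + 1) - 2 (1 - max p)/(d + 1)`: the two largest Lorenz values are `1` and
`1 - max p`, and the others are nonnegative. So it suffices to bound `P_X(ρ) x + P_P(ρ) y` away
from `2`. Both are expectations of `ρ` in unit vectors, the basis vector `e_x` and the Fourier
column `f_y`, with `|⟨e_x, f_y⟩| = 1/√d`. The Gram matrix of two unit vectors `e, f` has norm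
`1 + |⟨e, f⟩|`, so writing `ρ = Bᴴ B` and summing over the rows of `B` gives
`P_X(ρ) x + P_P(ρ) y ≤ 1 + 1/√d`, whence `G_XP(ρ) ≤ 2(d - 1)/(d + 1) - 2(1 - 1/√d)/(d + 1)`.
-/

open Matrix
open scoped ComplexOrder

noncomputable section

/-- The Lorenz values of `p : Fin d → ℝ`, computed with the sorting permutation `Tuple.sort p`
(they are independent of the choice of sorting permutation):
`L(p, ℓ) = ∑_{k=0}^{ℓ} p (π k)` where `π` arranges the values of `p` in ascending order. -/
def lorenzF {d : ℕ} (p : Fin d → ℝ) (ℓ : Fin d) : ℝ :=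
  ∑ k ∈ Finset.Iic ℓ, p (Tuple.sort p k)

/-- The Gini index of `p : Fin d → ℝ`: `G(p) = 1 − (2/(d+1)) · ∑_{ℓ=0}^{d−1} L(p, ℓ)`. -/
def giniF {d : ℕ} (p : Fin d → ℝ) : ℝ :=
  1 - (2 / ((d : ℝ) + 1)) * ∑ ℓ : Fin d, lorenzF p ℓ

/-- The Gini index of a function `p : ZMod d → ℝ`, obtained by reindexing along the
bijection `Fin d → ZMod d`, `k ↦ (k : ZMod d)`. -/
def gini {d : ℕ} [NeZero d] (p : ZMod d → ℝ) : ℝ :=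
  giniF (fun k : Fin d => p ((k : ℕ) : ZMod d))

/-- A density matrix: positive semidefinite with trace 1. -/
def IsDensityMatrix {d : ℕ} [NeZero d] (ρ : Matrix (ZMod d) (ZMod d) ℂ) : Prop :=
  ρ.PosSemidef ∧ ρ.trace = 1

/-- The position distribution of `ρ`: `P_X(ρ) r = Re(ρ r r)`. -/
def PX {d : ℕ} [NeZero d] (ρ : Matrix (ZMod d) (ZMod d) ℂ) : ZMod d → ℝ :=
  fun r => (ρ r r).re

/-- `ω = exp(2πi/d)`. -/
def omega (d : ℕ) : ℂ := Complex.exp (2 * Real.pi * Complex.I / d)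

/-- The Fourier matrix `F r s = ω^{(r·s).val} / √d`. -/
def Fmat (d : ℕ) [NeZero d] : Matrix (ZMod d) (ZMod d) ℂ :=
  Matrix.of fun r s : ZMod d => omega d ^ (r * s).val / (Real.sqrt d : ℂ)

/-- The momentum distribution of `ρ`: `P_P(ρ) r = Re((Fᴴ ρ F) r r)`. -/
def PP {d : ℕ} [NeZero d] (ρ : Matrix (ZMod d) (ZMod d) ℂ) : ZMod d → ℝ :=
  fun r => (((Fmat d)ᴴ * ρ * Fmat d) r r).re

/-- `G_X(ρ) = G(P_X(ρ))`. -/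
def GX {d : ℕ} [NeZero d] (ρ : Matrix (ZMod d) (ZMod d) ℂ) : ℝ := gini (PX ρ)

/-- `G_P(ρ) = G(P_P(ρ))`. -/
def GP {d : ℕ} [NeZero d] (ρ : Matrix (ZMod d) (ZMod d) ℂ) : ℝ := gini (PP ρ)

/-- `G_XP(ρ) = G_X(ρ) + G_P(ρ)`. -/
def GXP {d : ℕ} [NeZero d] (ρ : Matrix (ZMod d) (ZMod d) ℂ) : ℝ := GX ρ + GP ρ

end

open scoped InnerProductSpace
open WithLp (toLp)

section TwoUnitVectors

variable {𝕜 E : Type*} [RCLike 𝕜] [NormedAddCommGroup E] [InnerProductSpace 𝕜 E] {e f : E}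

theorem norm_smul_add_smul_sq_le (he : ‖e‖ = 1) (hf : ‖f‖ = 1) (a b : 𝕜) :
    ‖a • e + b • f‖ ^ 2 ≤ (1 + ‖⟪e, f⟫_𝕜‖) * (‖a‖ ^ 2 + ‖b‖ ^ 2) := by
  have hcross : RCLike.re ⟪a • e, b • f⟫_𝕜 ≤ ‖a‖ * ‖b‖ * ‖⟪e, f⟫_𝕜‖ := by
    refine (RCLike.re_le_norm _).trans_eq ?_
    simp only [inner_smul_left, inner_smul_right, norm_mul, RCLike.norm_conj]
    ring
  have hamgm : 2 * ‖a‖ * ‖b‖ ≤ ‖a‖ ^ 2 + ‖b‖ ^ 2 := two_mul_le_add_sq _ _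
  rw [norm_add_sq (𝕜 := 𝕜), norm_smul, norm_smul, he, hf]
  nlinarith [norm_nonneg ⟪e, f⟫_𝕜]

theorem norm_inner_sq_add_norm_inner_sq_le (he : ‖e‖ = 1) (hf : ‖f‖ = 1) (v : E) :
    ‖⟪e, v⟫_𝕜‖ ^ 2 + ‖⟪f, v⟫_𝕜‖ ^ 2 ≤ (1 + ‖⟪e, f⟫_𝕜‖) * ‖v‖ ^ 2 := by
  set a := ⟪e, v⟫_𝕜
  set b := ⟪f, v⟫_𝕜
  set T := ‖a‖ ^ 2 + ‖b‖ ^ 2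
  have hw : ⟪a • e + b • f, v⟫_𝕜 = (T : 𝕜) := by
    simp only [inner_add_left, inner_smul_left, RCLike.conj_mul, T, a, b]
    push_cast; ring
  have hT : T ≤ ‖a • e + b • f‖ * ‖v‖ := by
    calc T = ‖⟪a • e + b • f, v⟫_𝕜‖ := by
          rw [hw, RCLike.norm_ofReal, abs_of_nonneg (by positivity)]
      _ ≤ ‖a • e + b • f‖ * ‖v‖ := norm_inner_le_norm _ _
  have hsq : T ^ 2 ≤ (1 + ‖⟪e, f⟫_𝕜‖) * T * ‖v‖ ^ 2 := by
    calc T ^ 2 ≤ ‖a • e + b • f‖ ^ 2 * ‖v‖ ^ 2 := by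
          rw [← mul_pow]; exact pow_le_pow_left₀ (by positivity) hT 2
      _ ≤ (1 + ‖⟪e, f⟫_𝕜‖) * T * ‖v‖ ^ 2 := by
          gcongr; exact norm_smul_add_smul_sq_le he hf a b
  rcases (show 0 ≤ T by positivity).eq_or_lt with hT0 | hT0
  · rw [← hT0]; positivity
  · nlinarith

end TwoUnitVectors

namespace Matrix

variable {𝕜 m n p : Type*} [RCLike 𝕜] [Fintype m]

theorem inner_toLp_transpose (U : Matrix m n 𝕜) (V : Matrix m p 𝕜) (x : n) (y : p) :
    ⟪toLp 2 (Uᵀ x), toLp 2 (Vᵀ y)⟫_𝕜 = (Uᴴ * V) x y := by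
  simp [EuclideanSpace.inner_toLp_toLp, mul_apply, dotProduct, mul_comm]

theorem norm_toLp_transpose_sq (U : Matrix m n 𝕜) (x : n) :
    ‖toLp 2 (Uᵀ x)‖ ^ 2 = RCLike.re ((Uᴴ * U) x x) := by
  rw [← inner_self_eq_norm_sq (𝕜 := 𝕜), inner_toLp_transpose]

theorem re_conjTranspose_mul_self_apply (C : Matrix m n 𝕜) (x : n) :
    RCLike.re ((Cᴴ * C) x x) = ∑ k, ‖C k x‖ ^ 2 := by
  rw [← norm_toLp_transpose_sq, EuclideanSpace.norm_sq_eq]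
  rfl

theorem PosSemidef.re_conj_apply_add_le {ρ : Matrix m m 𝕜} (hρ : ρ.PosSemidef)
    {U V : Matrix m n 𝕜} {x y : n} (hU : (Uᴴ * U) x x = 1) (hV : (Vᴴ * V) y y = 1) :
    RCLike.re ((Uᴴ * ρ * U) x x) + RCLike.re ((Vᴴ * ρ * V) y y) ≤
      (1 + ‖(Uᴴ * V) x y‖) * RCLike.re ρ.trace := by
  classical
  open scoped MatrixOrder in
  obtain ⟨B, rfl⟩ := CStarAlgebra.nonneg_iff_eq_star_mul_self.mp hρ.nonneg
  have hexp (W : Matrix m n 𝕜) (z : n) :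
      RCLike.re ((Wᴴ * (star B * B) * W) z z) = ∑ k, ‖⟪toLp 2 (Wᵀ z), toLp 2 (Bᴴᵀ k)⟫_𝕜‖ ^ 2 := by
    rw [show Wᴴ * (star B * B) * W = (B * W)ᴴ * (B * W) by
      simp only [star_eq_conjTranspose, conjTranspose_mul, Matrix.mul_assoc],
      re_conjTranspose_mul_self_apply]
    refine Finset.sum_congr rfl fun k _ => ?_
    rw [inner_toLp_transpose, ← conjTranspose_mul, conjTranspose_apply, norm_star]
  have htrace : RCLike.re (star B * B).trace = ∑ k, ‖toLp 2 (Bᴴᵀ k)‖ ^ 2 := by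
    rw [star_eq_conjTranspose, trace_mul_comm, trace, map_sum]
    simp only [norm_toLp_transpose_sq, conjTranspose_conjTranspose, diag_apply]
  have hunit (W : Matrix m n 𝕜) (z : n) (hW : (Wᴴ * W) z z = 1) : ‖toLp 2 (Wᵀ z)‖ = 1 := by
    rw [← pow_eq_one_iff_of_nonneg (norm_nonneg _) two_ne_zero, norm_toLp_transpose_sq, hW,
      RCLike.one_re]
  rw [hexp, hexp, htrace, Finset.mul_sum, ← Finset.sum_add_distrib, ← inner_toLp_transpose]
  exact Finset.sum_le_sum fun k _ =>
    norm_inner_sq_add_norm_inner_sq_le (hunit U x hU) (hunit V y hV) _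

end Matrix

section Fourier

variable {d : ℕ} [NeZero d]

theorem omega_pow_val (a : ZMod d) : omega d ^ a.val = ZMod.stdAddChar a := by
  rw [ZMod.stdAddChar_apply, ZMod.toCircle_apply, omega, ← Complex.exp_nat_mul]
  ring_nf

theorem Fmat_apply (r s : ZMod d) : Fmat d r s = ZMod.stdAddChar (r * s) / (√d : ℂ) := by
  rw [Fmat, of_apply, omega_pow_val]

theorem norm_Fmat_apply (r s : ZMod d) : ‖Fmat d r s‖ = (√d)⁻¹ := by
  rw [Fmat_apply, norm_div, AddChar.norm_apply, Complex.norm_real,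
    Real.norm_of_nonneg (by positivity), one_div]

theorem Fmat_mem_unitaryGroup : Fmat d ∈ unitaryGroup (ZMod d) ℂ := by
  rw [mem_unitaryGroup_iff']
  ext r s
  have hd : (d : ℂ) ≠ 0 := NeZero.ne _
  have hsq : (√d : ℂ) * √d = d := by norm_cast; exact Real.mul_self_sqrt d.cast_nonneg
  calc (star (Fmat d) * Fmat d) r s
      = (∑ k, ZMod.stdAddChar (k * (s - r))) / d := by
        simp only [mul_apply, star_apply, Fmat_apply, star_div₀, Complex.star_def,
          ← AddChar.map_neg_eq_conj, Complex.conj_ofReal, Finset.sum_div]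
        refine Finset.sum_congr rfl fun k _ => ?_
        rw [div_mul_div_comm, ← AddChar.map_add_eq_mul, hsq]
        ring_nf
    _ = (1 : Matrix (ZMod d) (ZMod d) ℂ) r s := by
        rw [AddChar.sum_mulShift _ (ZMod.isPrimitive_stdAddChar d), ZMod.card, one_apply]
        by_cases h : r = s
        · simp [h, hd]
        · simp [sub_eq_zero, Ne.symm h, h]

end Fourier

namespace IsDensityMatrix

variable {d : ℕ} [NeZero d] {ρ : Matrix (ZMod d) (ZMod d) ℂ}

theorem conj_unitary (hρ : IsDensityMatrix ρ) {U : Matrix (ZMod d) (ZMod d) ℂ}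
    (hU : U ∈ unitaryGroup (ZMod d) ℂ) : IsDensityMatrix (Uᴴ * ρ * U) :=
  ⟨hρ.1.conjTranspose_mul_mul_same U, by
    rw [trace_mul_cycle, ← star_eq_conjTranspose, mem_unitaryGroup_iff.1 hU, one_mul, hρ.2]⟩

theorem PX_nonneg (hρ : IsDensityMatrix ρ) : 0 ≤ PX ρ :=
  fun _ => (Complex.nonneg_iff.1 hρ.1.diag_nonneg).1

theorem sum_PX (hρ : IsDensityMatrix ρ) : ∑ x, PX ρ x = 1 := by
  simpa [PX, trace, Complex.re_sum] using congrArg Complex.re hρ.2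

theorem PP_nonneg (hρ : IsDensityMatrix ρ) : 0 ≤ PP ρ :=
  (hρ.conj_unitary Fmat_mem_unitaryGroup).PX_nonneg

theorem sum_PP (hρ : IsDensityMatrix ρ) : ∑ y, PP ρ y = 1 :=
  (hρ.conj_unitary Fmat_mem_unitaryGroup).sum_PX

theorem PX_add_PP_le (hρ : IsDensityMatrix ρ) (x y : ZMod d) :
    PX ρ x + PP ρ y ≤ 1 + (√d)⁻¹ := by
  have hF : ((Fmat d)ᴴ * Fmat d) y y = 1 := by
    rw [← star_eq_conjTranspose, mem_unitaryGroup_iff'.1 Fmat_mem_unitaryGroup, one_apply_eq]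
  simpa [PX, PP, norm_Fmat_apply, hρ.2] using hρ.1.re_conj_apply_add_le (U := 1) (x := x) (by simp) hF

end IsDensityMatrix

section Gini

theorem lorenzF_nonneg {d : ℕ} {p : Fin d → ℝ} (hp : 0 ≤ p) (ℓ : Fin d) : 0 ≤ lorenzF p ℓ :=
  Finset.sum_nonneg fun _ _ => hp _

variable {n : ℕ}

theorem lorenzF_last (p : Fin (n + 1) → ℝ) : lorenzF p (Fin.last n) = ∑ i, p i := by
  rw [lorenzF, ← Fin.top_eq_last, Finset.Iic_top, Equiv.sum_comp]

theorem lorenzF_castSucc_last (p : Fin (n + 2) → ℝ) :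
    lorenzF p (Fin.last n).castSucc = ∑ i, p i - p (Tuple.sort p (Fin.last (n + 1))) := by
  rw [lorenzF, Fin.sum_Iic_castSucc, ← Fin.top_eq_last, Finset.Iic_top,
    ← Equiv.sum_comp (Tuple.sort p) p, Fin.sum_univ_castSucc (fun i => p (Tuple.sort p i))]
  ring

theorem giniF_le {d : ℕ} (hd : 2 ≤ d) {p : Fin d → ℝ} (hp : 0 ≤ p) (hsum : ∑ i, p i = 1) :
    ∃ k, giniF p ≤ ((d : ℝ) - 1) / (d + 1) - 2 / (d + 1) * (1 - p k) := by
  obtain ⟨n, rfl⟩ : ∃ n, d = n + 2 := ⟨d - 2, by omega⟩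
  refine ⟨Tuple.sort p (Fin.last (n + 1)), ?_⟩
  have htop : lorenzF p (Fin.last n).castSucc + lorenzF p (Fin.last (n + 1)) ≤
      ∑ ℓ, lorenzF p ℓ := by
    rw [← Finset.sum_pair (Fin.castSucc_lt_last _).ne]
    exact Finset.sum_le_sum_of_subset_of_nonneg (Finset.subset_univ _)
      fun ℓ _ _ => lorenzF_nonneg hp ℓ
  rw [lorenzF_castSucc_last, lorenzF_last, hsum] at htop
  have hfrac : ((n + 2 : ℕ) - 1 : ℝ) / ((n + 2 : ℕ) + 1) = 1 - 2 / ((n + 2 : ℕ) + 1) := by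
    field_simp; ring
  rw [giniF, hfrac]
  linarith [mul_le_mul_of_nonneg_left htop (by positivity : (0 : ℝ) ≤ 2 / ((n + 2 : ℕ) + 1))]

theorem gini_le {d : ℕ} [NeZero d] (hd : 2 ≤ d) {p : ZMod d → ℝ} (hp : 0 ≤ p)
    (hsum : ∑ x, p x = 1) :
    ∃ x, gini p ≤ ((d : ℝ) - 1) / (d + 1) - 2 / (d + 1) * (1 - p x) := by
  have hsum' : ∑ k : Fin d, p ((k : ℕ) : ZMod d) = 1 := by
    obtain ⟨n, rfl⟩ := Nat.exists_eq_succ_of_ne_zero (NeZero.ne d)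
    rw [← hsum]
    exact Fintype.sum_congr _ _ fun k => congrArg p (Fin.cast_val_eq_self k)
  obtain ⟨k, hk⟩ := giniF_le hd (fun k => hp _) hsum'
  exact ⟨_, hk⟩

end Gini

theorem isDensityMatrix_diagonal_single {d : ℕ} [NeZero d] (i : ZMod d) :
    IsDensityMatrix (diagonal (Pi.single i 1) : Matrix (ZMod d) (ZMod d) ℂ) := by
  refine ⟨posSemidef_diagonal_iff.2 fun j => ?_, by simp [trace_diagonal]⟩
  rcases eq_or_ne j i with rfl | hj <;> simp [*]

theorem IsDensityMatrix.GXP_le {d : ℕ} [NeZero d] (hd : 2 ≤ d)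
    {ρ : Matrix (ZMod d) (ZMod d) ℂ} (hρ : IsDensityMatrix ρ) :
    GXP ρ ≤ 2 * (((d : ℝ) - 1) / (d + 1)) - 2 / (d + 1) * (1 - (√d)⁻¹) := by
  obtain ⟨x, hx⟩ := gini_le hd hρ.PX_nonneg hρ.sum_PX
  obtain ⟨y, hy⟩ := gini_le hd hρ.PP_nonneg hρ.sum_PP
  have hxy := mul_le_mul_of_nonneg_left (hρ.PX_add_PP_le x y)
    (by positivity : (0 : ℝ) ≤ 2 / (d + 1))
  rw [GXP, GX, GP]
  linarith

/-- The uncertainty coefficient is strictly positive: there exists `ε > 0` such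
that every density matrix `ρ` satisfies `G_XP(ρ) ≤ 2(d − 1)/(d + 1) − ε`; equivalently, the
supremum of `G_XP` over all density matrices is strictly less than `2(d − 1)/(d + 1)`. -/
theorem uncertainty_coefficient_pos {d : ℕ} [NeZero d] (hd : 2 ≤ d) :
    (∃ ε : ℝ, 0 < ε ∧ ∀ ρ : Matrix (ZMod d) (ZMod d) ℂ, IsDensityMatrix ρ →
        GXP ρ ≤ 2 * (((d : ℝ) - 1) / ((d : ℝ) + 1)) - ε) ∧
    sSup {x : ℝ | ∃ ρ : Matrix (ZMod d) (ZMod d) ℂ, IsDensityMatrix ρ ∧ GXP ρ = x} <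
      2 * (((d : ℝ) - 1) / ((d : ℝ) + 1)) := by
  have hsqrt : 1 < √(d : ℝ) := (Real.lt_sqrt zero_le_one).2 (by norm_num; exact_mod_cast hd)
  have hε : 0 < 2 / ((d : ℝ) + 1) * (1 - (√d)⁻¹) :=
    mul_pos (by positivity) (sub_pos.2 (inv_lt_one_of_one_lt₀ hsqrt))
  refine ⟨⟨_, hε, fun ρ hρ => hρ.GXP_le hd⟩, ?_⟩
  refine (csSup_le ?_ ?_).trans_lt (sub_lt_self _ hε)
  · exact ⟨_, _, isDensityMatrix_diagonal_single 0, rfl⟩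
  · rintro _ ⟨ρ, hρ, rfl⟩
    exact hρ.GXP_le hd
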